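/- Let V be a finite-dimensional vector space, F = (0 = V_0 ≤ ... ≤ V_k = V) a flag, ω = (ω_i) a compatible family of σ-hermitian forms (Rad ω_i = V_{i-1}), and let U ≨ U' ≤ V with U transversal to (F,ω) and U' transversal to F. Set M = min{ i | ⟨V_i, U⟩ ∩ U' = U' }. Then M = min{ i | ⟨V_i, U⟩ = V }. -/
import Mathlib


variable {F V : Type*} [Field F] [AddCommGroup V] [Module F V]

/-- `U` is transversal to `W` inside the ambient space `T`. -/
def Transversal (T U W : Submodule F V) : Prop :=
  U ⊓ W = ⊥ ∨ U ⊔ W = T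

/-- A family `ω` of sesquilinear forms is compatible with the flag `Vf` if the radical of
`ω i` (as a form on `Vf i`) is `Vf (i-1)`, for `1 ≤ i ≤ k`. -/
def Compatible {σ : F →+* F} (k : ℕ) (Vf : ℕ → Submodule F V)
    (ω : ℕ → V →ₗ[F] V →ₛₗ[σ] F) : Prop :=
  ∀ i, 1 ≤ i → i ≤ k → ∀ x ∈ Vf i, ((∀ y ∈ Vf i, ω i x y = 0) ↔ x ∈ Vf (i - 1))

/-- The restriction of a sesquilinear form to a submodule is nondegenerate. -/
def NondegOn {σ : F →+* F} (B : V →ₗ[F] V →ₛₗ[σ] F) (S : Submodule F V) : Prop :=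
  ∀ x ∈ S, (∀ y ∈ S, B x y = 0) → x = 0

/-- `U` is transversal to the pair `(F, ω)`: transversal to the flag, and `U ⊓ V_{k_U}` is
`ω_{k_U}`-nondegenerate, where `k_U = min { i | U ⊓ V_i ≠ ⊥ }`. -/
def TransversalPair {σ : F →+* F} (T : Submodule F V) (k : ℕ) (Vf : ℕ → Submodule F V)
    (ω : ℕ → V →ₗ[F] V →ₛₗ[σ] F) (U : Submodule F V) : Prop :=
  (∀ i ≤ k, Transversal T U (Vf i)) ∧
  ∀ kU : ℕ, (U ⊓ Vf kU ≠ ⊥ ∧ ∀ j < kU, U ⊓ Vf j = ⊥) → NondegOn (ω kU) (U ⊓ Vf kU)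

/-- With `U` transversal to `(F,ω)` and `U'` transversal to `F`,
`U ≨ U'`, the minimum `M` of `{ i | ⟨V_i, U⟩ ⊓ U' = U' }` equals the minimum of
`{ i | ⟨V_i, U⟩ = V }`. -/
theorem min_sup_inter_eq_min_sup {σ : F →+* F} [FiniteDimensional F V]
    (k : ℕ) (Vf : ℕ → Submodule F V) (hmono : Monotone Vf)
    (h0 : Vf 0 = ⊥) (htop : Vf k = ⊤)
    (ω : ℕ → V →ₗ[F] V →ₛₗ[σ] F) (hcompat : Compatible k Vf ω)
    (U U' : Submodule F V) (hUU' : U < U')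
    (hU : TransversalPair ⊤ k Vf ω U)
    (hU' : ∀ i ≤ k, Transversal ⊤ U' (Vf i))
    (M : ℕ) (hM : (Vf M ⊔ U) ⊓ U' = U') (hMmin : ∀ j < M, (Vf j ⊔ U) ⊓ U' ≠ U') :
    Vf M ⊔ U = ⊤ ∧ ∀ j < M, Vf j ⊔ U ≠ ⊤ := by
  have hMk : M ≤ k := by
    by_contra h
    push_neg at h
    exact hMmin k h (by simp [htop])
  have hle : U' ≤ Vf M ⊔ U := hM.symm.le.trans inf_le_left
  constructor
  · rcases hU.1 M hMk with hbot | htop'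
    · obtain ⟨x, hxU', hxU⟩ := SetLike.exists_of_lt hUU'
      obtain ⟨v, hv, u, hu, hvu⟩ := Submodule.mem_sup.1 (hle hxU')
      have hvU' : v ∈ U' := by
        have hveq : v = x - u := by rw [← hvu]; abel
        rw [hveq]; exact Submodule.sub_mem _ hxU' (hUU'.le hu)
      have hvne : v ≠ 0 := by
        rintro rfl
        rw [zero_add] at hvu
        exact hxU (hvu ▸ hu)
      have hne : U' ⊓ Vf M ≠ ⊥ := by
        intro hb
        have : v ∈ (⊥ : Submodule F V) := hb ▸ Submodule.mem_inf.2 ⟨hvU', hv⟩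
        exact hvne (Submodule.mem_bot F |>.1 this)
      rcases hU' M hMk with hb | ht
      · exact absurd hb hne
      · refine eq_top_iff.2 ?_
        rw [← ht]
        exact sup_le hle le_sup_left
    · rw [sup_comm]; exact htop'
  · intro j hj hjt
    exact hMmin j hj (by simp [hjt])
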